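/- Let n, s ∈ ℤ with s ≥ 2 and 4s ≤ n + 1. Then: (a) the difference set V²_{n,s} − V²_{n,s} = {u − u' : u, u' ∈ V²_{n,s}} is an additive subgroup of ℝ^{n+1} (so V²_{n,s} is a translate of a lattice), and it equals A_n ∪ (t_{n,s} + A_n); (b) the additive subgroup of ℝ^{n+1} generated by {v − w : v, w ∈ S(n,s)} equals V²_{n,s} − V²_{n,s}, i.e., the polytope P(n,s) affinely generates V²_{n,s}. -/

import Mathlib

open Finset

noncomputable section

/-- The lattice `A_n = {x ∈ ℤ^{n+1} : Σ x_i = 0}`, viewed inside `ℝ^{n+1}`. -/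
def latticeA (n : ℕ) : Set (Fin (n+1) → ℝ) :=
  {x | (∀ i, ∃ m : ℤ, x i = m) ∧ ∑ i, x i = 0}

/-- The point lattice `V_{n,s} = {x ∈ ℤ^{n+1} : Σ x_i = s}`. -/
def Vset (n s : ℕ) : Set (Fin (n+1) → ℝ) :=
  {x | (∀ i, ∃ m : ℤ, x i = m) ∧ ∑ i, x i = (s : ℝ)}

/-- The vertex set `W(n+1,s) = {x ∈ {0,1}^{n+1} : Σ x_i = s}`. -/
def Wset (n s : ℕ) : Set (Fin (n+1) → ℝ) :=
  {x | (∀ i, x i = 0 ∨ x i = 1) ∧ ∑ i, x i = (s : ℝ)}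

/-- The vector `v_{n,s} = ((1/4)^{4s}; 0^{n+1-4s})`. -/
def vns (n s : ℕ) : Fin (n+1) → ℝ := fun i => if (i : ℕ) < 4 * s then 1 / 4 else 0

/-- The vector `t_{n,s} = ((1/2)^{2s}; (−1/2)^{2s}; 0^{n+1-4s})`. -/
def tns (n s : ℕ) : Fin (n+1) → ℝ := fun i =>
  if (i : ℕ) < 2 * s then 1 / 2 else if (i : ℕ) < 4 * s then -(1 / 2) else 0

/-- The point lattice `V²_{n,s} = V_{n,s} ∪ (t_{n,s} + V_{n,s})`. -/
def V2 (n s : ℕ) : Set (Fin (n+1) → ℝ) :=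
  Vset n s ∪ (fun x => tns n s + x) '' Vset n s

/-- The vertex set `S(n,s) = W(n+1,s) ∪ {2v_{n,s} − v : v ∈ W(n+1,s)}`
of the polytope `P(n,s)`. -/
def Sns (n s : ℕ) : Set (Fin (n+1) → ℝ) :=
  Wset n s ∪ (fun v => (2 : ℝ) • vns n s - v) '' Wset n s

/-- The quadratic form `q_{n,s}(x) = 2 Σ_{i<4s} x_i² + Σ_{i≥4s} x_i²`. -/
def qns (n s : ℕ) (x : Fin (n+1) → ℝ) : ℝ :=
  ∑ i : Fin (n+1), (if (i : ℕ) < 4 * s then (2:ℝ) else 1) * (x i) ^ 2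

/-!
`V_{n,s}` is a coset `w + A_n` for any `w ∈ W(n+1,s)`, and `2 t_{n,s} ∈ A_n`, so
`K = A_n ∪ (t_{n,s} + A_n)` is a group and `V²_{n,s} = w + K`, whence `V²_{n,s} − V²_{n,s} = K`.
The vertices lie in `V²_{n,s}` because `2 v_{n,s} − t_{n,s}` is a 0/1 vector with `2s` ones.
Conversely, exchanging one coordinate of a 0/1 vector with `s` ones shows that each `e_i − e_j` is
a difference of vertices, and these generate `A_n`; the difference `(2 v_{n,s} − w) − w` of two
vertices lies in `t_{n,s} + A_n`.
-/

namespace AddSubgroup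

variable {G : Type*} [AddCommGroup G]

def unionTranslate (H : AddSubgroup G) (t : G) (ht : t + t ∈ H) : AddSubgroup G where
  carrier := H ∪ (t + ·) '' H
  zero_mem' := Or.inl H.zero_mem
  add_mem' := by
    rintro _ _ (ha | ⟨a, ha, rfl⟩) (hb | ⟨b, hb, rfl⟩)
    · exact Or.inl (H.add_mem ha hb)
    · exact Or.inr ⟨_, H.add_mem ha hb, add_left_comm _ _ _⟩
    · exact Or.inr ⟨_, H.add_mem ha hb, (add_assoc _ _ _).symm⟩
    · have h : t + a + (t + b) = t + t + (a + b) := by abel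
      exact Or.inl (h ▸ H.add_mem ht (H.add_mem ha hb))
  neg_mem' := by
    rintro _ (ha | ⟨a, ha, rfl⟩)
    · exact Or.inl (H.neg_mem ha)
    · exact Or.inr ⟨_, H.sub_mem (H.neg_mem ht) ha, show t + _ = -(t + a) by abel⟩

variable {H : AddSubgroup G} {t : G} {ht : t + t ∈ H}

@[simp]
lemma coe_unionTranslate : (H.unionTranslate t ht : Set G) = (H : Set G) ∪ (t + ·) '' H := rfl

lemma unionTranslate_le {L : AddSubgroup G} (hH : H ≤ L) (htL : t ∈ L) :
    H.unionTranslate t ht ≤ L := by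
  rintro _ (ha | ⟨a, ha, rfl⟩)
  exacts [hH ha, L.add_mem htL (hH ha)]

lemma setOf_sub_image_add_left (K : AddSubgroup G) (p : G) :
    {x | ∃ u ∈ (p + ·) '' K, ∃ u' ∈ (p + ·) '' K, x = u - u'} = K := by
  ext x
  constructor
  · rintro ⟨_, ⟨a, ha, rfl⟩, _, ⟨b, hb, rfl⟩, rfl⟩
    simpa using K.sub_mem ha hb
  · exact fun hx => ⟨p + x, ⟨x, hx, rfl⟩, p, ⟨0, K.zero_mem, add_zero p⟩, by abel⟩

end AddSubgroup

def integerPoints (ι : Type*) : AddSubgroup (ι → ℝ) :=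
  AddSubgroup.pi Set.univ fun _ => (Int.castAddHom ℝ).range

lemma mem_integerPoints {ι : Type*} {x : ι → ℝ} :
    x ∈ integerPoints ι ↔ ∀ i, ∃ m : ℤ, x i = m := by
  simp [integerPoints, AddSubgroup.mem_pi, AddSubgroup.mem_zmultiples_iff, eq_comm]

variable {n s : ℕ}

lemma mem_latticeA {x : Fin (n+1) → ℝ} :
    x ∈ latticeA n ↔ x ∈ integerPoints _ ∧ ∑ i, x i = 0 := by
  rw [mem_integerPoints]; rfl

lemma mem_Vset {x : Fin (n+1) → ℝ} :
    x ∈ Vset n s ↔ x ∈ integerPoints _ ∧ ∑ i, x i = s := by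
  rw [mem_integerPoints]; rfl

def zeroSumLattice (n : ℕ) : AddSubgroup (Fin (n+1) → ℝ) where
  carrier := latticeA n
  zero_mem' := mem_latticeA.2 ⟨zero_mem _, by simp⟩
  add_mem' {a b} ha hb := by
    rw [mem_latticeA] at *
    exact ⟨add_mem ha.1 hb.1, by simp [sum_add_distrib, ha.2, hb.2]⟩
  neg_mem' {a} ha := by
    rw [mem_latticeA] at *
    exact ⟨neg_mem ha.1, by simp [ha.2]⟩

@[simp]
lemma coe_zeroSumLattice (n : ℕ) : (zeroSumLattice n : Set (Fin (n+1) → ℝ)) = latticeA n := rfl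

lemma sub_mem_zeroSumLattice {x y : Fin (n+1) → ℝ} (hx : x ∈ Vset n s) (hy : y ∈ Vset n s) :
    x - y ∈ zeroSumLattice n := by
  rw [mem_Vset] at hx hy
  exact mem_latticeA.2 ⟨sub_mem hx.1 hy.1, by simp [sum_sub_distrib, hx.2, hy.2]⟩

lemma Vset_eq_image_add {p : Fin (n+1) → ℝ} (hp : p ∈ Vset n s) :
    Vset n s = (p + ·) '' latticeA n := by
  ext x
  refine ⟨fun hx => ⟨x - p, sub_mem_zeroSumLattice hx hp, add_sub_cancel p x⟩, ?_⟩
  rintro ⟨a, ha, rfl⟩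
  rw [mem_Vset] at hp
  rw [mem_latticeA] at ha
  exact mem_Vset.2 ⟨add_mem hp.1 ha.1, by simp [sum_add_distrib, ha.2, hp.2]⟩

lemma Wset_subset_Vset : Wset n s ⊆ Vset n s := fun _ ⟨h01, hsum⟩ =>
  ⟨fun i => (h01 i).elim (fun h => ⟨0, by simp [h]⟩) (fun h => ⟨1, by simp [h]⟩), hsum⟩

lemma sum_single_mem_Wset {T : Finset (Fin (n+1))} (hT : #T = s) :
    ∑ k ∈ T, Pi.single k (1 : ℝ) ∈ Wset n s := by
  have hcoord : ∀ i, (∑ k ∈ T, Pi.single k (1 : ℝ)) i = if i ∈ T then 1 else 0 := fun i => by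
    simp [Finset.sum_apply, Finset.sum_pi_single]
  refine ⟨fun i => by rw [hcoord]; split_ifs <;> simp, ?_⟩
  simp [hcoord, hT]

lemma Wset_nonempty (h : s ≤ n + 1) : (Wset n s).Nonempty :=
  let ⟨_, _, hT⟩ := exists_subset_card_eq (s := (univ : Finset (Fin (n+1)))) (by simpa using h)
  ⟨_, sum_single_mem_Wset hT⟩

lemma exists_mem_Wset_sub_eq_single_sub_single (hs : 1 ≤ s) (hsn : s ≤ n) (i j : Fin (n+1)) :
    ∃ w ∈ Wset n s, ∃ w' ∈ Wset n s, w - w' = Pi.single i 1 - Pi.single j 1 := by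
  have hcard : s - 1 ≤ #((univ.erase i).erase j) :=
    calc s - 1 ≤ #(univ : Finset (Fin (n+1))) - 1 - 1 := by simp; omega
      _ ≤ #(univ.erase i) - 1 := Nat.sub_le_sub_right pred_card_le_card_erase 1
      _ ≤ _ := pred_card_le_card_erase
  obtain ⟨T, hT, hTcard⟩ := exists_subset_card_eq hcard
  have hiT : i ∉ T := fun h => by simpa using hT h
  have hjT : j ∉ T := fun h => by simpa using hT h
  refine ⟨_, sum_single_mem_Wset (T := insert i T) ?_,
    _, sum_single_mem_Wset (T := insert j T) ?_, ?_⟩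
  · rw [card_insert_of_notMem hiT]; omega
  · rw [card_insert_of_notMem hjT]; omega
  · rw [sum_insert hiT, sum_insert hjT]; abel

lemma zeroSumLattice_le {L : AddSubgroup (Fin (n+1) → ℝ)}
    (hL : ∀ i j, Pi.single i 1 - Pi.single j 1 ∈ L) : zeroSumLattice n ≤ L := by
  intro a ha
  obtain ⟨hint, hsum⟩ := mem_latticeA.1 ha
  choose m hm using mem_integerPoints.1 hint
  have hm0 : ∑ i, m i = 0 := by exact_mod_cast (sum_congr rfl fun i _ => hm i) ▸ hsum
  have ha : a = ∑ i, m i • (Pi.single i 1 - Pi.single 0 1) := by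
    simp only [smul_sub, sum_sub_distrib, ← sum_smul, hm0, zero_smul, sub_zero]
    rw [← univ_sum_single a]
    simp only [hm, ← Pi.single_zsmul, zsmul_one]
  rw [ha]
  exact sum_mem fun i _ => zsmul_mem (hL i 0) _

lemma sum_ite_val_lt {N c : ℕ} (h : c ≤ N) (r : ℝ) :
    ∑ i : Fin N, (if (i : ℕ) < c then r else 0) = c * r := by
  rw [Fin.sum_univ_eq_sum_range (fun i => if i < c then r else 0), ← sum_filter,
    show (range N).filter (· < c) = range c by ext; simp; omega, sum_const, card_range,
    nsmul_eq_mul]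

lemma sum_vns (h4 : 4 * s ≤ n + 1) : ∑ i, vns n s i = s := by
  simp only [vns, sum_ite_val_lt h4]; push_cast; ring

lemma sum_tns (h4 : 4 * s ≤ n + 1) : ∑ i, tns n s i = 0 := by
  have h : ∀ i : Fin (n+1), tns n s i =
      (if (i : ℕ) < 2 * s then 1 else 0) + (if (i : ℕ) < 4 * s then -(1 / 2) else 0) := by
    intro i; unfold tns; split_ifs <;> first | omega | norm_num
  rw [sum_congr rfl fun i _ => h i, sum_add_distrib, sum_ite_val_lt (by omega), sum_ite_val_lt h4]
  push_cast; ring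

lemma tns_add_tns_mem_zeroSumLattice (h4 : 4 * s ≤ n + 1) :
    tns n s + tns n s ∈ zeroSumLattice n := by
  refine mem_latticeA.2 ⟨mem_integerPoints.2 fun i => ?_, by simp [sum_add_distrib, sum_tns h4]⟩
  simp only [Pi.add_apply, tns]
  split_ifs
  exacts [⟨1, by norm_num⟩, ⟨-1, by norm_num⟩, ⟨0, by norm_num⟩]

lemma two_smul_vns_sub_tns_mem_integerPoints :
    (2 : ℝ) • vns n s - tns n s ∈ integerPoints _ := by
  refine mem_integerPoints.2 fun i => ?_
  simp only [Pi.sub_apply, Pi.smul_apply, smul_eq_mul, vns, tns]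
  split_ifs
  exacts [⟨0, by norm_num⟩, ⟨1, by norm_num⟩, by omega, ⟨0, by norm_num⟩]

lemma two_smul_vns_sub_tns_sub_mem_Vset (h4 : 4 * s ≤ n + 1) {w : Fin (n+1) → ℝ}
    (hw : w ∈ Wset n s) :
    (2 : ℝ) • vns n s - tns n s - w ∈ Vset n s := by
  obtain ⟨hwint, hwsum⟩ := mem_Vset.1 (Wset_subset_Vset hw)
  refine mem_Vset.2 ⟨sub_mem two_smul_vns_sub_tns_mem_integerPoints hwint, ?_⟩
  simp only [Pi.sub_apply, Pi.smul_apply, smul_eq_mul, sum_sub_distrib, ← mul_sum, sum_vns h4,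
    sum_tns h4, hwsum]
  ring

def latticeA2 (h4 : 4 * s ≤ n + 1) : AddSubgroup (Fin (n+1) → ℝ) :=
  (zeroSumLattice n).unionTranslate (tns n s) (tns_add_tns_mem_zeroSumLattice h4)

lemma V2_eq_image_add (h4 : 4 * s ≤ n + 1) {p : Fin (n+1) → ℝ} (hp : p ∈ Vset n s) :
    V2 n s = (p + ·) '' latticeA2 h4 := by
  rw [latticeA2, AddSubgroup.coe_unionTranslate, Set.image_union, Set.image_image, V2,
    Vset_eq_image_add hp, Set.image_image, coe_zeroSumLattice]
  simp only [add_left_comm]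

lemma Sns_subset_V2 (h4 : 4 * s ≤ n + 1) : Sns n s ⊆ V2 n s := by
  rintro _ (hw | ⟨w, hw, rfl⟩)
  · exact Or.inl (Wset_subset_Vset hw)
  · exact Or.inr ⟨_, two_smul_vns_sub_tns_sub_mem_Vset h4 hw,
      show tns n s + _ = (2 : ℝ) • vns n s - w by abel⟩

lemma zeroSumLattice_le_closure (hs : 1 ≤ s) (h4 : 4 * s ≤ n + 1) :
    zeroSumLattice n ≤ AddSubgroup.closure {x | ∃ v ∈ Sns n s, ∃ w ∈ Sns n s, x = v - w} :=
  zeroSumLattice_le fun i j =>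
    let ⟨w, hw, w', hw', h⟩ := exists_mem_Wset_sub_eq_single_sub_single hs (by omega) i j
    AddSubgroup.subset_closure ⟨w, Or.inl hw, w', Or.inl hw', h.symm⟩

lemma tns_mem_closure (hs : 1 ≤ s) (h4 : 4 * s ≤ n + 1) :
    tns n s ∈ AddSubgroup.closure {x | ∃ v ∈ Sns n s, ∃ w ∈ Sns n s, x = v - w} := by
  obtain ⟨w, hw⟩ := Wset_nonempty (n := n) (s := s) (by omega)
  have hS : (2 : ℝ) • vns n s - w - w ∈
      AddSubgroup.closure {x | ∃ v ∈ Sns n s, ∃ w ∈ Sns n s, x = v - w} :=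
    AddSubgroup.subset_closure ⟨_, Or.inr ⟨w, hw, rfl⟩, w, Or.inl hw, rfl⟩
  have hA : (2 : ℝ) • vns n s - tns n s - w - w ∈ zeroSumLattice n :=
    sub_mem_zeroSumLattice (two_smul_vns_sub_tns_sub_mem_Vset h4 hw) (Wset_subset_Vset hw)
  have ht : tns n s = ((2 : ℝ) • vns n s - w - w) - ((2 : ℝ) • vns n s - tns n s - w - w) := by
    abel
  exact ht ▸ sub_mem hS (zeroSumLattice_le_closure hs h4 hA)

/-- (a) The difference set `V²_{n,s} − V²_{n,s}` is a lattice, equal to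
`A_n ∪ (t_{n,s} + A_n)`; (b) the polytope `P(n,s)` affinely generates `V²_{n,s}`:
the subgroup generated by differences of its vertices is `V²_{n,s} − V²_{n,s}`. -/
theorem Pns_generates_V2 (n s : ℕ) (hs : 2 ≤ s) (h4s : 4 * s ≤ n + 1) :
    (∃ G : AddSubgroup (Fin (n+1) → ℝ),
        (G : Set (Fin (n+1) → ℝ)) = {x | ∃ u ∈ V2 n s, ∃ u' ∈ V2 n s, x = u - u'} ∧
        (G : Set (Fin (n+1) → ℝ)) = latticeA n ∪ (fun x => tns n s + x) '' latticeA n) ∧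
    (AddSubgroup.closure {x : Fin (n+1) → ℝ | ∃ v ∈ Sns n s, ∃ w ∈ Sns n s, x = v - w}
        : Set (Fin (n+1) → ℝ))
      = {x | ∃ u ∈ V2 n s, ∃ u' ∈ V2 n s, x = u - u'} := by
  obtain ⟨w, hw⟩ := Wset_nonempty (n := n) (s := s) (by omega)
  have hdiff : {x | ∃ u ∈ V2 n s, ∃ u' ∈ V2 n s, x = u - u'} = latticeA2 h4s := by
    rw [V2_eq_image_add h4s (Wset_subset_Vset hw)]
    exact AddSubgroup.setOf_sub_image_add_left _ w
  refine ⟨⟨latticeA2 h4s, hdiff.symm, rfl⟩, ?_⟩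
  rw [hdiff, SetLike.coe_set_eq]
  refine le_antisymm ?_ <| AddSubgroup.unionTranslate_le
    (zeroSumLattice_le_closure (by omega) h4s) (tns_mem_closure (by omega) h4s)
  rw [AddSubgroup.closure_le, ← hdiff]
  rintro _ ⟨v, hv, v', hv', rfl⟩
  exact ⟨v, Sns_subset_V2 h4s hv, v', Sns_subset_V2 h4s hv', rfl⟩
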